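/- Let $(G, \omega)$ be an infinite connected weighted graph with positive edge weights such that there is $C > 0$ with $\sum_{j \sim i} \omega_{ij} \leq C$ for every vertex $i$. Then for any pair of mutually disjoint nonempty vertex sets $V_1, V_2$, the vertex extremal length and the resistance satisfy $\operatorname{VEL}(V_1, V_2) \leq 2C \cdot \operatorname{RES}(V_1, V_2)$. -/

import Mathlib

/-! An admissible vertex metric `ν` induces the edge metric `η s(a, b) = ν a + ν b`, which is
admissible for the edge problem because every vertex of a nontrivial walk lies on one of its
edges. Since `(ν a + ν b)² ≤ 2 (ν a² + ν b²)` and each edge is counted once from each endpoint,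
`area_ω η ≤ 2 ∑ᵥ ν v² ∑_{j ∼ v} ω(v, j) ≤ 2C · area ν`. Hence `COND ≤ 2C · MOD`, and inverting
gives `VEL ≤ 2C · RES`. -/

open scoped ENNReal

/-- The vertex modulus of the family of paths joining `V₁` and `V₂` in `G`. -/
noncomputable def MODv {V : Type*} [DecidableEq V] (G : SimpleGraph V) (V₁ V₂ : Set V) :
    ℝ≥0∞ :=
  ⨅ (ν : V → ℝ≥0∞) (_ : ∀ (u w : V) (q : G.Walk u w), u ∈ V₁ → w ∈ V₂ →
      1 ≤ ∑ x ∈ q.support.toFinset, ν x), ∑' x, ν x ^ 2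

/-- The vertex extremal length between `V₁` and `V₂` in `G`. -/
noncomputable def VEL {V : Type*} [DecidableEq V] (G : SimpleGraph V) (V₁ V₂ : Set V) :
    ℝ≥0∞ :=
  (MODv G V₁ V₂)⁻¹

/-- The conductance between `V₁` and `V₂` in the weighted graph `(G, ω)`. -/
noncomputable def COND {V : Type*} [DecidableEq V] (G : SimpleGraph V) (ω : Sym2 V → ℝ≥0∞)
    (V₁ V₂ : Set V) : ℝ≥0∞ :=
  ⨅ (η : Sym2 V → ℝ≥0∞) (_ : ∀ (u w : V) (q : G.Walk u w), u ∈ V₁ → w ∈ V₂ →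
      1 ≤ ∑ e ∈ q.edges.toFinset, η e), ∑' e : G.edgeSet, ω e * η (e : Sym2 V) ^ 2

/-- The resistance between `V₁` and `V₂` in the weighted graph `(G, ω)`. -/
noncomputable def RES {V : Type*} [DecidableEq V] (G : SimpleGraph V) (ω : Sym2 V → ℝ≥0∞)
    (V₁ V₂ : Set V) : ℝ≥0∞ :=
  (COND G ω V₁ V₂)⁻¹

namespace ENNReal

theorem add_sq_le_two_mul (a b : ℝ≥0∞) : (a + b) ^ 2 ≤ 2 * (a ^ 2 + b ^ 2) := by
  have h := rpow_add_le_mul_rpow_add_rpow a b (p := 2) one_le_two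
  norm_num [rpow_two] at h
  exact h

theorem inv_le_mul_inv_of_le_mul {a b c : ℝ≥0∞} (hc₀ : c ≠ 0) (hc : c ≠ ∞) (h : a ≤ c * b) :
    b⁻¹ ≤ c * a⁻¹ := by
  rw [← ENNReal.inv_le_iff_inv_le, ENNReal.mul_inv (.inl hc₀) (.inl hc), inv_inv, mul_comm,
    ← div_eq_mul_inv, ENNReal.div_le_iff_le_mul (.inl hc₀) (.inl hc), mul_comm]
  exact h

end ENNReal

section

variable {V : Type*}

def vertexSumMetric (ν : V → ℝ≥0∞) : Sym2 V → ℝ≥0∞ :=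
  Sym2.lift ⟨fun a b => ν a + ν b, fun _ _ => add_comm _ _⟩

@[simp]
theorem vertexSumMetric_mk (ν : V → ℝ≥0∞) (a b : V) : vertexSumMetric ν s(a, b) = ν a + ν b :=
  rfl

theorem sum_filter_mem_le_vertexSumMetric [DecidableEq V] (ν : V → ℝ≥0∞) (s : Finset V)
    (e : Sym2 V) : ∑ x ∈ s with x ∈ e, ν x ≤ vertexSumMetric ν e := by
  induction e using Sym2.ind with
  | _ a b =>
    calc ∑ x ∈ s with x ∈ s(a, b), ν x
        ≤ ∑ x ∈ {a, b}, ν x := Finset.sum_le_sum_of_subset fun x hx => by simp_all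
      _ ≤ vertexSumMetric ν s(a, b) := by
          rcases eq_or_ne a b with rfl | hab
          · simp
          · simp [Finset.sum_pair hab]

theorem sum_le_sum_vertexSumMetric [DecidableEq V] (ν : V → ℝ≥0∞) {s : Finset V}
    {t : Finset (Sym2 V)} (hst : ∀ x ∈ s, ∃ e ∈ t, x ∈ e) :
    ∑ x ∈ s, ν x ≤ ∑ e ∈ t, vertexSumMetric ν e :=
  calc ∑ x ∈ s, ν x ≤ ∑ x ∈ s, ∑ e ∈ t, if x ∈ e then ν x else 0 := by
        refine Finset.sum_le_sum fun x hx => ?_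
        obtain ⟨e, he, hxe⟩ := hst x hx
        simpa [hxe] using Finset.single_le_sum (f := fun e => if x ∈ e then ν x else 0)
          (fun _ _ => zero_le) he
    _ = ∑ e ∈ t, ∑ x ∈ s with x ∈ e, ν x := by
        rw [Finset.sum_comm]
        simp only [Finset.sum_filter]
    _ ≤ ∑ e ∈ t, vertexSumMetric ν e :=
        Finset.sum_le_sum fun e _ => sum_filter_mem_le_vertexSumMetric ν s e

namespace SimpleGraph

variable {G : SimpleGraph V}

theorem Walk.sum_support_le_sum_edges_vertexSumMetric [DecidableEq V] (ν : V → ℝ≥0∞)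
    {u w : V} (q : G.Walk u w) (hq : ¬q.Nil) :
    ∑ x ∈ q.support.toFinset, ν x ≤ ∑ e ∈ q.edges.toFinset, vertexSumMetric ν e :=
  sum_le_sum_vertexSumMetric ν fun x hx => by
    obtain ⟨e, he, hxe⟩ :=
      (mem_support_iff_exists_mem_edges_of_not_nil hq).1 (List.mem_toFinset.1 hx)
    exact ⟨e, List.mem_toFinset.2 he, hxe⟩

theorem tsum_edgeSet_le_tsum_tsum_adj (F : Sym2 V → ℝ≥0∞) (g : V → V → ℝ≥0∞)
    (hF : ∀ a b, G.Adj a b → F s(a, b) ≤ g a b + g b a) :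
    ∑' e : G.edgeSet, F e ≤ ∑' v, ∑' j : {j // G.Adj v j}, g v j := by
  classical
  let edge : (Σ v, {j // G.Adj v j}) → G.edgeSet := fun d => ⟨s(d.1, d.2), d.2.2⟩
  let g' : (Σ v, {j // G.Adj v j}) → ℝ≥0∞ := fun d => g d.1 d.2
  have hfiber : ∀ e : G.edgeSet, F e ≤ ∑' d : edge ⁻¹' {e}, g' d := by
    rintro ⟨e, he⟩
    induction e using Sym2.ind with
    | _ a b =>
      have hab : (⟨a, b, he⟩ : Σ v, {j // G.Adj v j}) ≠ ⟨b, a, G.adj_symm he⟩ :=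
        fun h => G.ne_of_adj he (congrArg Sigma.fst h)
      rw [tsum_subtype]
      calc F s(a, b) ≤ g a b + g b a := hF a b he
        _ = ∑ d ∈ {⟨a, b, he⟩, ⟨b, a, G.adj_symm he⟩},
              (edge ⁻¹' {⟨s(a, b), he⟩}).indicator g' d := by
            rw [Finset.sum_pair hab]
            simp [edge, g', Set.indicator, Sym2.eq_swap]
        _ ≤ _ := ENNReal.sum_le_tsum _
  calc ∑' e : G.edgeSet, F e ≤ ∑' e : G.edgeSet, ∑' d : edge ⁻¹' {e}, g' d :=
        ENNReal.tsum_le_tsum hfiber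
    _ = ∑' v, ∑' j : {j // G.Adj v j}, g v j := by
        rw [ENNReal.tsum_fiberwise, ENNReal.tsum_sigma']

theorem tsum_edgeSet_mul_vertexSumMetric_sq_le (ω : Sym2 V → ℝ≥0∞) {C : ℝ≥0∞}
    (hdeg : ∀ i : V, ∑' j : {j : V // G.Adj i j}, ω s(i, (j : V)) ≤ C) (ν : V → ℝ≥0∞) :
    ∑' e : G.edgeSet, ω e * vertexSumMetric ν e ^ 2 ≤ 2 * C * ∑' v, ν v ^ 2 :=
  calc ∑' e : G.edgeSet, ω e * vertexSumMetric ν e ^ 2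
      ≤ ∑' v, ∑' j : {j // G.Adj v j}, 2 * ν v ^ 2 * ω s(v, j) := by
        refine tsum_edgeSet_le_tsum_tsum_adj (fun e => ω e * vertexSumMetric ν e ^ 2)
          (fun v j => 2 * ν v ^ 2 * ω s(v, j)) fun a b _ => ?_
        calc ω s(a, b) * (ν a + ν b) ^ 2 ≤ ω s(a, b) * (2 * (ν a ^ 2 + ν b ^ 2)) := by
              gcongr; exact ENNReal.add_sq_le_two_mul _ _
          _ = 2 * ν a ^ 2 * ω s(a, b) + 2 * ν b ^ 2 * ω s(b, a) := by
              rw [Sym2.eq_swap]; ring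
    _ = ∑' v, 2 * ν v ^ 2 * ∑' j : {j // G.Adj v j}, ω s(v, j) := by
        simp only [ENNReal.tsum_mul_left]
    _ ≤ ∑' v, 2 * ν v ^ 2 * C := by gcongr with v; exact hdeg v
    _ = 2 * C * ∑' v, ν v ^ 2 := by
        rw [ENNReal.tsum_mul_right, ENNReal.tsum_mul_left]; ring

end SimpleGraph

theorem COND_le_two_mul_tsum_sq [DecidableEq V] {G : SimpleGraph V} {ω : Sym2 V → ℝ≥0∞}
    {C : ℝ≥0∞} (hdeg : ∀ i : V, ∑' j : {j : V // G.Adj i j}, ω s(i, (j : V)) ≤ C)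
    {V₁ V₂ : Set V} (hd : Disjoint V₁ V₂) {ν : V → ℝ≥0∞}
    (hν : ∀ (u w : V) (q : G.Walk u w), u ∈ V₁ → w ∈ V₂ → 1 ≤ ∑ x ∈ q.support.toFinset, ν x) :
    COND G ω V₁ V₂ ≤ 2 * C * ∑' v, ν v ^ 2 := by
  refine le_trans (iInf₂_le (vertexSumMetric ν) fun u w q hu hw => ?_)
    (G.tsum_edgeSet_mul_vertexSumMetric_sq_le ω hdeg ν)
  have hq : ¬q.Nil := SimpleGraph.Walk.not_nil_of_ne (hd.ne_of_mem hu hw)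
  exact (hν u w q hu hw).trans (q.sum_support_le_sum_edges_vertexSumMetric ν hq)

end

theorem stmt_19_general {V : Type*} [DecidableEq V] (G : SimpleGraph V) (ω : Sym2 V → ℝ≥0∞)
    (C : ℝ≥0∞) (hC : 0 < C) (hC' : C ≠ ⊤)
    (hrow : ∀ i : V, ∑' j : {j : V // G.Adj i j}, ω s(i, (j : V)) ≤ C)
    (V₁ V₂ : Set V) (hd : Disjoint V₁ V₂) :
    VEL G V₁ V₂ ≤ 2 * C * RES G ω V₁ V₂ := by
  simp only [VEL, RES, MODv, ENNReal.inv_iInf, iSup_le_iff]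
  intro ν hν
  exact ENNReal.inv_le_mul_inv_of_le_mul (mul_ne_zero two_ne_zero hC.ne')
    (ENNReal.mul_ne_top ENNReal.ofNat_ne_top hC') (COND_le_two_mul_tsum_sq hrow hd hν)

/-- He's Lemma 5.4: if the weighted vertex degrees are uniformly bounded by `C`, then
`VEL(V₁, V₂) ≤ 2C · RES(V₁, V₂)`. -/
theorem stmt_19 {V : Type*} [DecidableEq V] [Infinite V] (G : SimpleGraph V)
    (hG : G.Connected) (ω : Sym2 V → ℝ≥0∞) (hpos : ∀ e ∈ G.edgeSet, 0 < ω e)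
    (C : ℝ≥0∞) (hC : 0 < C) (hC' : C ≠ ⊤)
    (hrow : ∀ i : V, ∑' j : {j : V // G.Adj i j}, ω s(i, (j : V)) ≤ C)
    (V₁ V₂ : Set V) (h₁ : V₁.Nonempty) (h₂ : V₂.Nonempty) (hd : Disjoint V₁ V₂) :
    VEL G V₁ V₂ ≤ 2 * C * RES G ω V₁ V₂ :=
  stmt_19_general G ω C hC hC' hrow V₁ V₂ hd
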